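/- arXiv:2204.05492 — 4 statements merged into one kernel-verified Lean document; each statement's English description precedes it below -/
import Mathlib

section
/- If x, y ∈ ℂ^d satisfy ⟨x, y⟩ ∈ ℝ with ⟨x, y⟩ ≥ 0, then ‖x·x* − y·y*‖_F² ≥ (1/2)·‖x‖₂²·‖x − y‖₂². -/
open MeasureTheory ProbabilityTheory Complex Finset
open scoped Real ComplexInnerProductSpace

noncomputable section

/-- `‖X‖_{ψ₂} ≤ K`: all moments are finite and `(𝔼|X|^p)^{1/p} ≤ √p · K` for `p ≥ 1`. -/
def PsiTwoLe {Ω : Type*} [MeasurableSpace Ω] (μ : Measure Ω) (X : Ω → ℂ) (K : ℝ) : Prop :=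
  ∀ p : ℝ, 1 ≤ p → Integrable (fun ω => ‖X ω‖ ^ p) μ ∧
    (∫ ω, ‖X ω‖ ^ p ∂μ) ^ (1 / p) ≤ Real.sqrt p * K

/-- The standing assumptions on the complex sub-Gaussian variable `ξ = ξ₁ + ξ₂ i`. -/
structure StdSubgaussian {Ω : Type*} [MeasurableSpace Ω] (μ : Measure Ω)
    (ξ : Ω → ℂ) (Cψ γ : ℝ) : Prop where
  meas : Measurable ξ
  psi2 : PsiTwoLe μ ξ Cψ
  mean_zero : ∫ ω, ξ ω ∂μ = 0
  sq_zero : ∫ ω, ξ ω ^ 2 ∂μ = 0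
  absSq_one : ∫ ω, ‖ξ ω‖ ^ 2 ∂μ = 1
  abs4_eq : ∫ ω, ‖ξ ω‖ ^ 4 ∂μ = γ
  indep_re_im : IndepFun (fun ω => (ξ ω).re) (fun ω => (ξ ω).im) μ
  ident_re_im : Measure.map (fun ω => (ξ ω).re) μ = Measure.map (fun ω => (ξ ω).im) μ

/-- The entries of the random measurement vectors `a j` are i.i.d. copies of `ξ`. -/
def IIDEntries {Ω : Type*} [MeasurableSpace Ω] (μ : Measure Ω) {d m : ℕ}
    (a : Fin m → Ω → EuclideanSpace ℂ (Fin d)) (ξ : Ω → ℂ) : Prop :=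
  (∀ (j : Fin m) (l : Fin d), Measurable fun ω => a j ω l) ∧
  iIndepFun (fun (p : Fin m × Fin d) ω => a p.1 ω p.2) μ ∧
  ∀ (j : Fin m) (l : Fin d), Measure.map (fun ω => a j ω l) μ = Measure.map ξ μ

/-- The entries of a single random vector `a` are i.i.d. copies of `ξ`. -/
def IIDEntriesVec {Ω : Type*} [MeasurableSpace Ω] (μ : Measure Ω) {d : ℕ}
    (a : Ω → EuclideanSpace ℂ (Fin d)) (ξ : Ω → ℂ) : Prop :=
  (∀ l : Fin d, Measurable fun ω => a ω l) ∧
  iIndepFun (fun (l : Fin d) ω => a ω l) μ ∧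
  ∀ l : Fin d, Measure.map (fun ω => a ω l) μ = Measure.map ξ μ

/-- Euclidean norm of a real vector. -/
def l2 {m : ℕ} (η : Fin m → ℝ) : ℝ := Real.sqrt (∑ j, η j ^ 2)

/-- The amplitude-based loss `∑ (|⟨a_j, x⟩| − b_j)²`. -/
def ampLoss {d m : ℕ} (a : Fin m → EuclideanSpace ℂ (Fin d)) (b : Fin m → ℝ)
    (x : EuclideanSpace ℂ (Fin d)) : ℝ :=
  ∑ j, (‖⟪a j, x⟫‖ - b j) ^ 2

/-- `xhat` is a (global) minimizer of the amplitude-based model. -/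
def IsAmpMinimizer {d m : ℕ} (a : Fin m → EuclideanSpace ℂ (Fin d)) (b : Fin m → ℝ)
    (xhat : EuclideanSpace ℂ (Fin d)) : Prop :=
  ∀ x, ampLoss a b xhat ≤ ampLoss a b x

/-- `xhat` is a minimizer of the constrained ℓ₁ model with tolerance `ε`. -/
def IsL1Minimizer {d m : ℕ} (a : Fin m → EuclideanSpace ℂ (Fin d)) (b : Fin m → ℝ)
    (ε : ℝ) (xhat : EuclideanSpace ℂ (Fin d)) : Prop :=
  Real.sqrt (ampLoss a b xhat) ≤ ε ∧
  ∀ x, Real.sqrt (ampLoss a b x) ≤ ε →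
    (∑ l, ‖xhat l‖) ≤ ∑ l, ‖x l‖

/-- Frobenius norm of a complex matrix. -/
def frobNorm {d : ℕ} (X : Matrix (Fin d) (Fin d) ℂ) : ℝ :=
  Real.sqrt (∑ i, ∑ j, ‖X i j‖ ^ 2)

/-- The quadratic form `a* X a`. -/
def quadForm {d : ℕ} (a : EuclideanSpace ℂ (Fin d)) (X : Matrix (Fin d) (Fin d) ℂ) : ℂ :=
  dotProduct (fun i => (starRingEnd ℂ) (a i)) (X.mulVec fun i => a i)

/-- The rank-one matrix `x x*`. -/
def outerProd {d : ℕ} (x : EuclideanSpace ℂ (Fin d)) : Matrix (Fin d) (Fin d) ℂ :=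
  Matrix.of fun j l => x j * (starRingEnd ℂ) (x l)

end

/-!
With `t = ⟪x, y⟫ ≥ 0`, expanding the entries gives
`‖x x* − y y*‖_F² = ‖x‖⁴ + ‖y‖⁴ − 2 t²` and `‖x − y‖² = ‖x‖² − 2 t + ‖y‖²`, so the claim is
a polynomial inequality in `‖x‖, ‖y‖, t` on the range `0 ≤ t ≤ ‖x‖ ‖y‖` given by Cauchy–Schwarz.
The deficit is concave in `t`, hence it suffices to check the endpoints: at `t = 0` it is
a positive quadratic form in `‖x‖², ‖y‖²`, and at `t = ‖x‖ ‖y‖` it factors as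
`(‖x‖ − ‖y‖)² (‖y‖² + 2 ‖x‖ ‖y‖ + ‖x‖² / 2)`.
-/

open ComplexConjugate

theorem Complex.sum_sum_normSq_mul_conj_sub {ι : Type*} [Fintype ι] (z w : ι → ℂ) :
    ∑ i, ∑ j, normSq (z i * conj (z j) - w i * conj (w j)) =
      (∑ i, normSq (z i)) ^ 2 + (∑ i, normSq (w i)) ^ 2
        - 2 * normSq (∑ i, conj (z i) * w i) := by
  set s := ∑ i, conj (z i) * w i
  have cross : ∑ i, ∑ j, (z i * conj (z j) * conj (w i * conj (w j))).re = normSq s :=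
    calc ∑ i, ∑ j, (z i * conj (z j) * conj (w i * conj (w j))).re
        = (∑ i, ∑ j, z i * conj (z j) * conj (w i * conj (w j))).re := by simp only [re_sum]
      _ = (conj s * s).re := by
        rw [map_sum, sum_mul_sum]
        congr 1
        refine sum_congr rfl fun i _ => sum_congr rfl fun j _ => ?_
        simp only [map_mul, conj_conj]
        ring
      _ = normSq s := by rw [← normSq_eq_conj_mul_self, ofReal_re]
  simp only [normSq_sub, normSq_mul, normSq_conj, sum_sub_distrib, sum_add_distrib,
    ← mul_sum, ← sum_mul, cross]
  ring

theorem frobNorm_outerProd_sub_sq {d : ℕ} (x y : EuclideanSpace ℂ (Fin d)) :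
    frobNorm (outerProd x - outerProd y) ^ 2 = ‖x‖ ^ 4 + ‖y‖ ^ 4 - 2 * ‖⟪x, y⟫‖ ^ 2 := by
  have norm_sq (v : EuclideanSpace ℂ (Fin d)) : ‖v‖ ^ 2 = ∑ i, normSq (v i) := by
    simp only [EuclideanSpace.norm_sq_eq, Complex.sq_norm]
  have inner_eq : ⟪x, y⟫ = ∑ i, conj (x i) * y i := by
    simp [PiLp.inner_apply, mul_comm]
  rw [frobNorm, Real.sq_sqrt (by positivity)]
  simp only [Matrix.sub_apply, outerProd, Matrix.of_apply, Complex.sq_norm]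
  rw [Complex.sum_sum_normSq_mul_conj_sub, ← inner_eq, ← norm_sq, ← norm_sq]
  ring

theorem half_sq_mul_le_of_le_mul {p q t : ℝ} (ht : 0 ≤ t) (htpq : t ≤ p * q) :
    1 / 2 * p ^ 2 * (p ^ 2 - 2 * t + q ^ 2) ≤ p ^ 4 + q ^ 4 - 2 * t ^ 2 := by
  nlinarith [mul_nonneg ht (sub_nonneg.2 htpq), sq_nonneg (p - q), sq_nonneg (p ^ 2 - q ^ 2),
    ht.trans htpq, sq_nonneg (p ^ 2 - 2 * t)]

/-- Lemma 2.1: if `⟨x, y⟩` is real and nonnegative, then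
`‖x x* − y y*‖_F² ≥ (1/2) ‖x‖² ‖x − y‖²`. -/
theorem statement6 {d : ℕ} (x y : EuclideanSpace ℂ (Fin d))
    (him : (⟪x, y⟫ : ℂ).im = 0) (hre : 0 ≤ (⟪x, y⟫ : ℂ).re) :
    (1 / 2) * ‖x‖ ^ 2 * ‖x - y‖ ^ 2 ≤ frobNorm (outerProd x - outerProd y) ^ 2 := by
  have norm_inner : ‖⟪x, y⟫‖ = (⟪x, y⟫ : ℂ).re := by
    rw [← re_add_im ⟪x, y⟫, him]
    simp [abs_of_nonneg hre]
  rw [frobNorm_outerProd_sub_sq, norm_inner, norm_sub_sq (𝕜 := ℂ)]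
  exact half_sq_mul_le_of_le_mul hre (re_inner_le_norm x y)
end

section
/- Let a₁,…,a_m ∈ ℂ^d and b = (b₁,…,b_m) ∈ ℝ^m be fixed, and let x̂ ∈ ℂ^d be any (global or local) minimizer of the function x ↦ Σ_{j=1}^m (|⟨a_j, x⟩| − b_j)² on ℂ^d, viewed as a function of the real and imaginary parts of x. Then Σ_{j=1}^m (|⟨a_j, x̂⟩| − b_j)·|⟨a_j, x̂⟩| = 0. -/
/-!
Along the ray `t ↦ t • x̂` with `t > 0` the loss is the polynomial `∑ⱼ (t rⱼ − bⱼ)²`, where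
`rⱼ = |⟨aⱼ, x̂⟩|`, and it has a local minimum at `t = 1`; its derivative there,
`2 ∑ⱼ (rⱼ − bⱼ) rⱼ`, must vanish.
-/

open MeasureTheory ProbabilityTheory Complex Finset
open scoped Real ComplexInnerProductSpace

theorem sum_sub_mul_eq_zero_of_isLocalMin_sum_sq {ι : Type*} (s : Finset ι) (r b : ι → ℝ)
    (h : IsLocalMin (fun t : ℝ => ∑ j ∈ s, (t * r j - b j) ^ 2) 1) :
    ∑ j ∈ s, (r j - b j) * r j = 0 := by
  have hderiv : HasDerivAt (fun t : ℝ => ∑ j ∈ s, (t * r j - b j) ^ 2)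
      (∑ j ∈ s, 2 * (r j - b j) * r j) 1 := by
    refine HasDerivAt.fun_sum fun j _ => ?_
    simpa using (((hasDerivAt_id (1 : ℝ)).mul_const (r j)).sub_const (b j)).fun_pow 2
  have hzero := h.hasDerivAt_eq_zero hderiv
  simp_rw [mul_assoc, ← Finset.mul_sum] at hzero
  simpa using hzero

theorem ampLoss_ofReal_smul {d m : ℕ} (a : Fin m → EuclideanSpace ℂ (Fin d)) (b : Fin m → ℝ)
    {t : ℝ} (ht : 0 ≤ t) (x : EuclideanSpace ℂ (Fin d)) :
    ampLoss a b ((t : ℂ) • x) = ∑ j, (t * ‖⟪a j, x⟫‖ - b j) ^ 2 := by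
  simp only [ampLoss, inner_smul_right, norm_mul, Complex.norm_real, Real.norm_of_nonneg ht]

/-- first-order optimality condition for the amplitude-based loss at any
(local or global) minimizer. -/
theorem statement14 {d m : ℕ} (a : Fin m → EuclideanSpace ℂ (Fin d)) (b : Fin m → ℝ)
    (xhat : EuclideanSpace ℂ (Fin d)) (h : IsLocalMin (ampLoss a b) xhat) :
    ∑ j, (‖⟪a j, xhat⟫‖ - b j) * ‖⟪a j, xhat⟫‖ = 0 := by
  have hray : IsLocalMin (fun t : ℝ => ampLoss a b ((t : ℂ) • xhat)) 1 :=
    IsLocalMin.comp_continuous (f := ampLoss a b) (g := fun t : ℝ => (t : ℂ) • xhat) (b := 1)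
      (by simpa using h) (by fun_prop)
  refine sum_sub_mul_eq_zero_of_isLocalMin_sum_sq univ _ b (hray.congr ?_)
  filter_upwards [lt_mem_nhds one_pos] with t ht using ampLoss_ofReal_smul a b ht.le xhat
end

section
/- Let a = (a₁,…,a_d) ∈ ℂ^d be a random vector whose entries are i.i.d. copies of a complex random variable ξ with E ξ = 0, E ξ² = 0, E|ξ|² = 1 and E|ξ|⁴ = γ. Then for every Hermitian matrix X ∈ ℂ^{d×d}, E|a*Xa|² = ‖X‖_F² + (Σ_{i=1}^d X_{ii})² + (γ − 2)·Σ_{i=1}^d |X_{ii}|². In particular, if γ > 1 then E|a*Xa|² ≥ min{1, γ − 1}·‖X‖_F². -/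
open MeasureTheory ProbabilityTheory Complex Finset
open scoped Real ComplexInnerProductSpace

/-! Expanding `|a*Xa|² = ∑ X_il conj(X_pq) conj(a_i) a_l a_p conj(a_q)`, each monomial is a product
over coordinates `k` of `conj(a_k)^A_k a_k^B_k`, so by independence its expectation is a product
of mixed moments of `ξ`. As `𝔼 ξ = 𝔼 ξ² = 0`, only the pairings `i = l, p = q` and `i = p, l = q`
contribute, except on the full diagonal where the moment is `γ`; summing against `X` gives
`|tr X|² + ‖X‖_F² + (γ - 2) ∑ |X_ii|²`. The lower bound then follows from `∑ |X_ii|² ≤ ‖X‖_F²`. -/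

open ComplexConjugate

theorem ProbabilityTheory.iIndepFun.integrable_fun_prod {Ω 𝕜 ι : Type*} [RCLike 𝕜]
    [MeasurableSpace Ω] {μ : Measure Ω} [Fintype ι] {X : ι → Ω → 𝕜}
    (hX : iIndepFun X μ) (hX_meas : ∀ i, Measurable (X i)) (hX_int : ∀ i, Integrable (X i) μ) :
    Integrable (fun ω => ∏ i, X i ω) μ := by
  refine ⟨Finset.aestronglyMeasurable_fun_prod _ fun i _ => (hX_meas i).aestronglyMeasurable, ?_⟩
  have h := lintegral_prod_eq_prod_lintegral_of_indepFun univ (fun i ω => ‖X i ω‖ₑ)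
    (hX.comp (fun _ => enorm) fun _ => measurable_enorm) fun i => (hX_meas i).enorm
  simp only [enorm_eq_nnnorm, ← ENNReal.ofNNReal_finsetProd, ← nnnorm_prod] at h
  simp only [HasFiniteIntegral, enorm_eq_nnnorm, h]
  exact ENNReal.prod_lt_top fun i _ => (hX_int i).2

section FourthMoment

variable {ι R : Type*} [Fintype ι] [DecidableEq ι] [CommRing R]

/-- `𝔼[conj aᵢ · aₗ · aₚ · conj a_q]` for i.i.d. entries with `𝔼 ξ = 𝔼 ξ² = 0`, `𝔼|ξ|² = 1`,
`𝔼|ξ|⁴ = γ`: only the pairings `(i,l)(p,q)` and `(i,p)(l,q)` survive, and on the full diagonal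
their total `2` is replaced by `γ`. -/
def fourthMomentTensor (γ : R) (i l p q : ι) : R :=
  (if i = l ∧ p = q then 1 else 0) + (if i = p ∧ l = q then 1 else 0) +
    (if i = l ∧ p = q ∧ i = p then γ - 2 else 0)

theorem prod_eq_fourthMomentTensor {m : ℕ → ℕ → R} (h00 : m 0 0 = 1) (h01 : m 0 1 = 0)
    (h10 : m 1 0 = 0) (h20 : m 2 0 = 0) (h11 : m 1 1 = 1) (i l p q : ι) :
    ∏ k, m ((if i = k then 1 else 0) + (if q = k then 1 else 0))
        ((if l = k then 1 else 0) + (if p = k then 1 else 0)) =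
      fourthMomentTensor (m 2 2) i l p q := by
  unfold fourthMomentTensor
  rcases eq_or_ne i l with rfl | hil
  · rcases eq_or_ne p q with rfl | hpq
    · rcases eq_or_ne i p with rfl | hip
      · rw [Fintype.prod_eq_single i fun k hk => by simp [hk.symm, h00]]
        norm_num
      · rw [Fintype.prod_eq_mul i p hip fun k hk => by simp [hk.1.symm, hk.2.symm, h00]]
        simp [hip, hip.symm, h11]
    · rcases eq_or_ne i p with rfl | hip
      · rw [prod_eq_zero (mem_univ q) (by simp [hpq, h10])]
        simp [hpq]
      · rw [prod_eq_zero (mem_univ p) (by simp [hip, hpq.symm, h01])]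
        simp [hpq, hip]
  · rcases eq_or_ne i p with rfl | hip
    · rcases eq_or_ne l q with rfl | hlq
      · rw [Fintype.prod_eq_mul i l hil fun k hk => by simp [hk.1.symm, hk.2.symm, h00]]
        simp [hil, hil.symm, h11]
      · rw [prod_eq_zero (mem_univ l) (by simp [hil, hlq.symm, h01])]
        simp [hil, hlq]
    · rcases eq_or_ne q i with rfl | hqi
      · rw [prod_eq_zero (mem_univ q) (by simp [hil.symm, hip.symm, h20])]
        simp [hil, hip]
      · rw [prod_eq_zero (mem_univ i) (by simp [hil.symm, hip.symm, hqi, h10])]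
        simp [hil, hip]

theorem sum_mul_fourthMomentTensor (γ : R) (X Y : Matrix ι ι R) :
    ∑ i, ∑ l, ∑ p, ∑ q, X i l * Y p q * fourthMomentTensor γ i l p q =
      X.trace * Y.trace + ∑ i, ∑ l, X i l * Y i l + (γ - 2) * ∑ i, X i i * Y i i := by
  simp only [fourthMomentTensor, mul_add, sum_add_distrib, ite_and, mul_ite, mul_one, mul_zero,
    sum_ite_irrel, sum_const_zero, sum_ite_eq, mem_univ, if_true]
  rw [Matrix.trace, Matrix.trace, sum_mul_sum, mul_sum]
  simp only [Matrix.diag, mul_comm (γ - 2)]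

end FourthMoment

section MixedMoment

variable {Ω Ω' : Type*} [MeasurableSpace Ω] [MeasurableSpace Ω'] {μ : Measure Ω} {ν : Measure Ω'}

noncomputable def mixedMoment (μ : Measure Ω) (ξ : Ω → ℂ) (A B : ℕ) : ℂ :=
  ∫ ω, conj (ξ ω) ^ A * ξ ω ^ B ∂μ

theorem mixedMoment_zero_zero [IsProbabilityMeasure μ] (ξ : Ω → ℂ) : mixedMoment μ ξ 0 0 = 1 := by
  simp [mixedMoment]

theorem mixedMoment_zero_one (ξ : Ω → ℂ) : mixedMoment μ ξ 0 1 = ∫ ω, ξ ω ∂μ := by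
  simp [mixedMoment]

theorem mixedMoment_zero_two (ξ : Ω → ℂ) : mixedMoment μ ξ 0 2 = ∫ ω, ξ ω ^ 2 ∂μ := by
  simp [mixedMoment]

theorem mixedMoment_swap (ξ : Ω → ℂ) (A B : ℕ) :
    mixedMoment μ ξ B A = conj (mixedMoment μ ξ A B) := by
  simp [mixedMoment, ← integral_conj, mul_comm]

theorem mixedMoment_self (ξ : Ω → ℂ) (n : ℕ) :
    mixedMoment μ ξ n n = ((∫ ω, ‖ξ ω‖ ^ (2 * n) ∂μ : ℝ) : ℂ) := by
  simp only [mixedMoment, ← mul_pow, Complex.conj_mul', pow_mul]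
  exact_mod_cast integral_ofReal (𝕜 := ℂ)

theorem ProbabilityTheory.IdentDistrib.mixedMoment_eq {X : Ω → ℂ} {Y : Ω' → ℂ}
    (h : IdentDistrib X Y μ ν) (A B : ℕ) : mixedMoment μ X A B = mixedMoment ν Y A B :=
  (h.comp (by fun_prop : Measurable fun z : ℂ => conj z ^ A * z ^ B)).integral_eq

theorem integrable_conj_pow_mul_pow [IsFiniteMeasure μ] {ξ : Ω → ℂ}
    (hξ : AEStronglyMeasurable ξ μ) {n A B : ℕ} (hn : Integrable (fun ω => ‖ξ ω‖ ^ n) μ)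
    (hAB : A + B ≤ n) : Integrable (fun ω => conj (ξ ω) ^ A * ξ ω ^ B) μ := by
  refine (integrable_norm_iff (by fun_prop)).mp ?_
  simpa [pow_add] using integrable_norm_pow_of_le hξ hAB hn

end MixedMoment

section IIDFamily

variable {Ω ι : Type*} [MeasurableSpace Ω] {μ : Measure Ω} [Fintype ι] {x : ι → Ω → ℂ} {ξ : Ω → ℂ}

theorem integrable_prod_conj_pow_mul_pow (hx : iIndepFun x μ) (hx_meas : ∀ k, Measurable (x k))
    (hxξ : ∀ k, IdentDistrib (x k) ξ μ μ) {n : ℕ} (hn : Integrable (fun ω => ‖ξ ω‖ ^ n) μ)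
    {A B : ι → ℕ} (hAB : ∀ k, A k + B k ≤ n) :
    Integrable (fun ω => ∏ k, conj (x k ω) ^ A k * x k ω ^ B k) μ := by
  have := hx.isProbabilityMeasure
  refine (hx.comp (fun k z => conj z ^ A k * z ^ B k) fun k => by fun_prop).integrable_fun_prod
    (fun k => by fun_prop) fun k => integrable_conj_pow_mul_pow (hx_meas k).aestronglyMeasurable
      (((hxξ k).comp (by fun_prop : Measurable fun z : ℂ => ‖z‖ ^ n)).integrable_iff.mpr hn) (hAB k)

theorem integral_prod_conj_pow_mul_pow (hx : iIndepFun x μ) (hx_meas : ∀ k, Measurable (x k))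
    (hxξ : ∀ k, IdentDistrib (x k) ξ μ μ) (A B : ι → ℕ) :
    ∫ ω, ∏ k, conj (x k ω) ^ A k * x k ω ^ B k ∂μ = ∏ k, mixedMoment μ ξ (A k) (B k) := by
  rw [hx.integral_fun_prod_comp (f := fun k z => conj z ^ A k * z ^ B k)
    (fun k => (hx_meas k).aemeasurable) fun k => by fun_prop]
  exact prod_congr rfl fun k _ => (hxξ k).mixedMoment_eq (A k) (B k)

variable [DecidableEq ι]

theorem conj_mul_mul_mul_conj_eq_prod (z : ι → ℂ) (i l p q : ι) :
    conj (z i) * z l * (z p * conj (z q)) =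
      ∏ k, conj (z k) ^ ((if i = k then 1 else 0) + (if q = k then 1 else 0)) *
        z k ^ ((if l = k then 1 else 0) + (if p = k then 1 else 0)) := by
  simp only [pow_add, prod_mul_distrib, prod_pow_boole, mem_univ, if_true]
  ring

theorem integrable_conj_mul_mul_mul_conj (hx : iIndepFun x μ) (hx_meas : ∀ k, Measurable (x k))
    (hxξ : ∀ k, IdentDistrib (x k) ξ μ μ) (h4 : Integrable (fun ω => ‖ξ ω‖ ^ 4) μ)
    (i l p q : ι) :
    Integrable (fun ω => conj (x i ω) * x l ω * (x p ω * conj (x q ω))) μ := by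
  refine (integrable_prod_conj_pow_mul_pow hx hx_meas hxξ h4 fun k => ?_).congr
    (ae_of_all _ fun ω => (conj_mul_mul_mul_conj_eq_prod (x · ω) i l p q).symm)
  split_ifs <;> omega

theorem integral_conj_mul_mul_mul_conj (hx : iIndepFun x μ) (hx_meas : ∀ k, Measurable (x k))
    (hxξ : ∀ k, IdentDistrib (x k) ξ μ μ) {γ : ℝ} (hmean : ∫ ω, ξ ω ∂μ = 0)
    (hsq : ∫ ω, ξ ω ^ 2 ∂μ = 0) (habs2 : ∫ ω, ‖ξ ω‖ ^ 2 ∂μ = 1)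
    (habs4 : ∫ ω, ‖ξ ω‖ ^ 4 ∂μ = γ) (i l p q : ι) :
    ∫ ω, conj (x i ω) * x l ω * (x p ω * conj (x q ω)) ∂μ =
      fourthMomentTensor (γ : ℂ) i l p q := by
  have := hx.isProbabilityMeasure
  have h01 : mixedMoment μ ξ 0 1 = 0 := by rw [mixedMoment_zero_one, hmean]
  have h10 : mixedMoment μ ξ 1 0 = 0 := by rw [mixedMoment_swap, h01, map_zero]
  have h20 : mixedMoment μ ξ 2 0 = 0 := by
    rw [mixedMoment_swap, mixedMoment_zero_two, hsq, map_zero]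
  have h11 : mixedMoment μ ξ 1 1 = 1 := by rw [mixedMoment_self, habs2, Complex.ofReal_one]
  have h22 : mixedMoment μ ξ 2 2 = γ := by rw [mixedMoment_self, ← habs4]
  rw [integral_congr_ae (ae_of_all _ fun ω => conj_mul_mul_mul_conj_eq_prod (x · ω) i l p q),
    integral_prod_conj_pow_mul_pow hx hx_meas hxξ, ← h22]
  exact prod_eq_fourthMomentTensor (mixedMoment_zero_zero ξ) h01 h10 h20 h11 i l p q

end IIDFamily

section QuadForm

variable {d : ℕ}

theorem ofReal_norm_quadForm_sq (z : EuclideanSpace ℂ (Fin d)) (X : Matrix (Fin d) (Fin d) ℂ) :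
    ((‖quadForm z X‖ ^ 2 : ℝ) : ℂ) =
      ∑ i, ∑ l, ∑ p, ∑ q, X i l * conj (X p q) * (conj (z i) * z l * (z p * conj (z q))) := by
  rw [Complex.ofReal_pow, ← Complex.mul_conj', quadForm, dotProduct, map_sum, sum_mul_sum]
  simp only [Matrix.mulVec, dotProduct, map_mul, map_sum, conj_conj, mul_sum, sum_mul]
  refine sum_congr rfl fun i _ => ((sum_congr rfl fun p _ => sum_comm).trans sum_comm).trans ?_
  exact sum_congr rfl fun l _ => sum_congr rfl fun p _ => sum_congr rfl fun q _ => by ring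

theorem frobNorm_sq (X : Matrix (Fin d) (Fin d) ℂ) : frobNorm X ^ 2 = ∑ i, ∑ j, ‖X i j‖ ^ 2 :=
  Real.sq_sqrt (by positivity)

theorem sum_norm_diag_sq_le_frobNorm_sq (X : Matrix (Fin d) (Fin d) ℂ) :
    ∑ i, ‖X i i‖ ^ 2 ≤ frobNorm X ^ 2 := by
  rw [frobNorm_sq]
  exact sum_le_sum fun i _ => single_le_sum (fun j _ => sq_nonneg ‖X i j‖) (mem_univ i)

end QuadForm

theorem Matrix.IsHermitian.norm_trace_sq {n : Type*} [Fintype n] {X : Matrix n n ℂ}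
    (hX : X.IsHermitian) : ‖X.trace‖ ^ 2 = (∑ i, (X i i).re) ^ 2 := by
  have h : X.trace = ((∑ i, (X i i).re : ℝ) : ℂ) := by
    push_cast
    exact sum_congr rfl fun i _ => (hX.coe_re_apply_self i).symm
  rw [h, Complex.norm_real, Real.norm_eq_abs, sq_abs]

theorem integral_norm_quadForm_sq {Ω : Type*} [MeasurableSpace Ω] {μ : Measure Ω} {d : ℕ}
    {γ : ℝ} {ξ : Ω → ℂ} {a : Ω → EuclideanSpace ℂ (Fin d)} (hmeas : Measurable ξ)
    (hint4 : Integrable (fun ω => ‖ξ ω‖ ^ 4) μ) (hmean : ∫ ω, ξ ω ∂μ = 0)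
    (hsq : ∫ ω, ξ ω ^ 2 ∂μ = 0) (habs2 : ∫ ω, ‖ξ ω‖ ^ 2 ∂μ = 1)
    (habs4 : ∫ ω, ‖ξ ω‖ ^ 4 ∂μ = γ) (ha : IIDEntriesVec μ a ξ) (X : Matrix (Fin d) (Fin d) ℂ) :
    ∫ ω, ‖quadForm (a ω) X‖ ^ 2 ∂μ =
      frobNorm X ^ 2 + ‖X.trace‖ ^ 2 + (γ - 2) * ∑ i, ‖X i i‖ ^ 2 := by
  obtain ⟨ha_meas, ha_indep, ha_map⟩ := ha
  have hxξ k : IdentDistrib (fun ω => a ω k) ξ μ μ :=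
    ⟨(ha_meas k).aemeasurable, hmeas.aemeasurable, ha_map k⟩
  have hint i l p q := integrable_conj_mul_mul_mul_conj ha_indep ha_meas hxξ hint4 i l p q
  have hmoment i l p q := integral_conj_mul_mul_mul_conj ha_indep ha_meas hxξ hmean hsq habs2
    habs4 i l p q
  apply Complex.ofReal_injective
  calc ((∫ ω, ‖quadForm (a ω) X‖ ^ 2 ∂μ : ℝ) : ℂ)
      = ∫ ω, ((‖quadForm (a ω) X‖ ^ 2 : ℝ) : ℂ) ∂μ := integral_ofReal.symm
    _ = ∑ i, ∑ l, ∑ p, ∑ q, X i l * conj (X p q) * fourthMomentTensor (γ : ℂ) i l p q := by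
      simp (disch := fun_prop) only [ofReal_norm_quadForm_sq, integral_finsetSum,
        integral_const_mul, hmoment]
    _ = X.trace * (X.map conj).trace + ∑ i, ∑ l, X i l * conj (X i l) +
          (γ - 2) * ∑ i, X i i * conj (X i i) :=
      sum_mul_fourthMomentTensor _ X (X.map conj)
    _ = ((frobNorm X ^ 2 + ‖X.trace‖ ^ 2 + (γ - 2) * ∑ i, ‖X i i‖ ^ 2 : ℝ) : ℂ) := by
      have htr : (X.map conj).trace = conj X.trace := by simp [Matrix.trace]
      rw [htr, frobNorm_sq]
      push_cast
      simp only [Complex.mul_conj']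
      ring

theorem min_mul_frobNorm_sq_le {d : ℕ} (X : Matrix (Fin d) (Fin d) ℂ) (γ t : ℝ) :
    min 1 (γ - 1) * frobNorm X ^ 2 ≤ frobNorm X ^ 2 + t ^ 2 + (γ - 2) * ∑ i, ‖X i i‖ ^ 2 := by
  have hdiag := sum_norm_diag_sq_le_frobNorm_sq X
  have hdiag_nonneg : 0 ≤ ∑ i, ‖X i i‖ ^ 2 := by positivity
  have hfrob_nonneg : 0 ≤ frobNorm X ^ 2 := by positivity
  rcases le_total γ 2 with hγ | hγ
  · nlinarith [mul_le_mul_of_nonneg_right (min_le_right 1 (γ - 1)) hfrob_nonneg, sq_nonneg t]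
  · nlinarith [mul_le_mul_of_nonneg_right (min_le_left 1 (γ - 1)) hfrob_nonneg, sq_nonneg t]

theorem statement16_general {Ω : Type*} [MeasurableSpace Ω] (μ : Measure Ω)
    {d : ℕ} (γ : ℝ) (ξ : Ω → ℂ) (a : Ω → EuclideanSpace ℂ (Fin d))
    (hmeas : Measurable ξ)
    (hint4 : Integrable (fun ω => ‖ξ ω‖ ^ 4) μ)
    (hmean : ∫ ω, ξ ω ∂μ = 0)
    (hsq : ∫ ω, ξ ω ^ 2 ∂μ = 0)
    (habs2 : ∫ ω, ‖ξ ω‖ ^ 2 ∂μ = 1)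
    (habs4 : ∫ ω, ‖ξ ω‖ ^ 4 ∂μ = γ)
    (ha : IIDEntriesVec μ a ξ) :
    ∀ X : Matrix (Fin d) (Fin d) ℂ, X.IsHermitian →
      (∫ ω, ‖quadForm (a ω) X‖ ^ 2 ∂μ =
          frobNorm X ^ 2 + (∑ i, (X i i).re) ^ 2 +
            (γ - 2) * ∑ i, ‖X i i‖ ^ 2) ∧
        (1 < γ →
          min 1 (γ - 1) * frobNorm X ^ 2 ≤ ∫ ω, ‖quadForm (a ω) X‖ ^ 2 ∂μ) := by
  intro X hX
  have hmoment := integral_norm_quadForm_sq hmeas hint4 hmean hsq habs2 habs4 ha X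
  rw [hX.norm_trace_sq] at hmoment
  exact ⟨hmoment, fun _ => hmoment ▸ min_mul_frobNorm_sq_le X γ _⟩

/-- second-moment identity for the quadratic form `a* X a` with i.i.d.
entries, and the resulting lower bound when `γ > 1`. -/
theorem statement16 {Ω : Type*} [MeasurableSpace Ω] (μ : Measure Ω) [IsProbabilityMeasure μ]
    {d : ℕ} (γ : ℝ) (ξ : Ω → ℂ) (a : Ω → EuclideanSpace ℂ (Fin d))
    (hmeas : Measurable ξ)
    (hint4 : Integrable (fun ω => ‖ξ ω‖ ^ 4) μ)
    (hmean : ∫ ω, ξ ω ∂μ = 0)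
    (hsq : ∫ ω, ξ ω ^ 2 ∂μ = 0)
    (habs2 : ∫ ω, ‖ξ ω‖ ^ 2 ∂μ = 1)
    (habs4 : ∫ ω, ‖ξ ω‖ ^ 4 ∂μ = γ)
    (ha : IIDEntriesVec μ a ξ) :
    ∀ X : Matrix (Fin d) (Fin d) ℂ, X.IsHermitian →
      (∫ ω, ‖quadForm (a ω) X‖ ^ 2 ∂μ =
          frobNorm X ^ 2 + (∑ i, (X i i).re) ^ 2 +
            (γ - 2) * ∑ i, ‖X i i‖ ^ 2) ∧
        (1 < γ →
          min 1 (γ - 1) * frobNorm X ^ 2 ≤ ∫ ω, ‖quadForm (a ω) X‖ ^ 2 ∂μ) :=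
  statement16_general μ γ ξ a hmeas hint4 hmean hsq habs2 habs4 ha
end

section
/- Let d ≥ 2, let a_j ∈ ℂ^d, j = 1,…,m, be i.i.d. complex sub-Gaussian random vectors whose entries are i.i.d. copies of ξ, let x₀ = (1, 0, …, 0) ∈ ℂ^d, η = (1, …, 1) ∈ ℝ^m, b_j = |⟨a_j, x₀⟩| + 1, and ε = √(8m). Then with probability at least 1/2 one has Σ_{j=1}^m b_j² ≤ ε², so that x̂ = 0 is a minimizer of the constrained ℓ₁ model (minimize ‖x‖₁ over x ∈ ℂ^d subject to (Σ_{j=1}^m (|⟨a_j, x⟩| − b_j)²)^{1/2} ≤ ε); consequently, with probability at least 1/2 there is a minimizer x̂ of this model with min over θ ∈ [0, 2π) of ‖x̂ − exp(iθ)·x₀‖₂ = 1 ≥ ε/(√8·√m). -/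
open MeasureTheory ProbabilityTheory Complex Finset
open scoped Real ComplexInnerProductSpace

/-! Since `x₀ = e₁`, `b_j = |a_{j1}| + 1` and `b_j² ≤ 2|a_{j1}|² + 2`, so `∑ b_j² ≤ ε² = 8m` as soon
as `∑ |a_{j1}|² ≤ 3m`. That sum has mean `m`, so by Markov's inequality this happens with
probability at least `2/3`. On that event `0` is feasible, hence (with ℓ₁-norm `0`) a minimizer, and
it lies at distance `‖x₀‖ = 1` from every `e^{iθ} x₀`. -/

section Markov

variable {Ω : Type*} [MeasurableSpace Ω] {μ : Measure Ω} [IsProbabilityMeasure μ]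

theorem one_sub_integral_div_le_measureReal_le {g : Ω → ℝ} (hg : 0 ≤ᵐ[μ] g)
    (hint : Integrable g μ) {t : ℝ} (ht : 0 < t) :
    1 - (∫ ω, g ω ∂μ) / t ≤ μ.real {ω | g ω ≤ t} := by
  have hcover : Set.univ = {ω | g ω ≤ t} ∪ {ω | t ≤ g ω} := by
    ext ω
    simpa using le_total (g ω) t
  have hunion := measureReal_union_le (μ := μ) {ω | g ω ≤ t} {ω | t ≤ g ω}
  rw [← hcover, probReal_univ] at hunion
  have hmarkov : μ.real {ω | t ≤ g ω} ≤ (∫ ω, g ω ∂μ) / t := by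
    rw [le_div_iff₀ ht, mul_comm]
    exact mul_meas_ge_le_integral_of_nonneg hg hint t
  linarith

theorem two_thirds_le_measureReal_sum_le_three_mul_card {ι : Type*} [Fintype ι]
    {f : ι → Ω → ℝ} (hf : ∀ i, 0 ≤ f i) (hint : ∀ i, Integrable (f i) μ)
    (hmean : ∀ i, ∫ ω, f i ω ∂μ ≤ 1) :
    2 / 3 ≤ μ.real {ω | ∑ i, f i ω ≤ 3 * Fintype.card ι} := by
  rcases isEmpty_or_nonempty ι with hι | hι
  · norm_num
  have hcard : (0 : ℝ) < Fintype.card ι := by exact_mod_cast Fintype.card_pos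
  have hsum_mean : ∫ ω, ∑ i, f i ω ∂μ ≤ Fintype.card ι := by
    rw [integral_finsetSum _ fun i _ => hint i]
    simpa using Finset.sum_le_sum fun i (_ : i ∈ Finset.univ) => hmean i
  have hratio : (∫ ω, ∑ i, f i ω ∂μ) / (3 * Fintype.card ι) ≤ 1 / 3 := by
    rw [div_le_iff₀ (by positivity)]
    linarith
  calc (2 : ℝ) / 3 ≤ 1 - (∫ ω, ∑ i, f i ω ∂μ) / (3 * Fintype.card ι) := by linarith
    _ ≤ _ := one_sub_integral_div_le_measureReal_le
        (Filter.Eventually.of_forall fun ω => Finset.sum_nonneg fun i _ => hf i ω)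
        (integrable_finsetSum _ fun i _ => hint i) (by positivity)

end Markov

theorem IIDEntries.identDistrib {Ω : Type*} [MeasurableSpace Ω] {μ : Measure Ω} {d m : ℕ}
    {a : Fin m → Ω → EuclideanSpace ℂ (Fin d)} {ξ : Ω → ℂ} (ha : IIDEntries μ a ξ)
    (hξ : Measurable ξ) (j : Fin m) (l : Fin d) :
    IdentDistrib (fun ω => a j ω l) ξ μ μ :=
  ⟨(ha.1 j l).aemeasurable, hξ.aemeasurable, ha.2.2 j l⟩

theorem StdSubgaussian.integrable_norm_sq {Ω : Type*} [MeasurableSpace Ω] {μ : Measure Ω}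
    {ξ : Ω → ℂ} {Cψ γ : ℝ} (hξ : StdSubgaussian μ ξ Cψ γ) :
    Integrable (fun ω => ‖ξ ω‖ ^ 2) μ :=
  Integrable.of_integral_ne_zero (by rw [hξ.absSq_one]; exact one_ne_zero)

theorem norm_inner_single_one {d : ℕ} (v : EuclideanSpace ℂ (Fin d)) (i : Fin d) :
    ‖⟪v, EuclideanSpace.single i (1 : ℂ)⟫‖ = ‖v i‖ := by
  rw [EuclideanSpace.inner_single_right, one_mul, Complex.norm_conj]

theorem sum_sq_norm_inner_single_add_one_le {d m : ℕ}
    (v : Fin m → EuclideanSpace ℂ (Fin d)) (i : Fin d) :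
    ∑ j, (‖⟪v j, EuclideanSpace.single i (1 : ℂ)⟫‖ + 1) ^ 2 ≤ 2 * ∑ j, ‖v j i‖ ^ 2 + 2 * m := by
  calc ∑ j, (‖⟪v j, EuclideanSpace.single i (1 : ℂ)⟫‖ + 1) ^ 2
      ≤ ∑ j, (2 * ‖v j i‖ ^ 2 + 2) := Finset.sum_le_sum fun j _ => by
        rw [norm_inner_single_one]
        nlinarith [sq_nonneg (‖v j i‖ - 1)]
    _ = 2 * ∑ j, ‖v j i‖ ^ 2 + 2 * m := by
        simp [Finset.sum_add_distrib, Finset.mul_sum, mul_comm]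

theorem ampLoss_zero {d m : ℕ} (a : Fin m → EuclideanSpace ℂ (Fin d)) (b : Fin m → ℝ) :
    ampLoss a b 0 = ∑ j, b j ^ 2 := by
  simp [ampLoss]

theorem isL1Minimizer_zero {d m : ℕ} {a : Fin m → EuclideanSpace ℂ (Fin d)} {b : Fin m → ℝ}
    {ε : ℝ} (hb : ∑ j, b j ^ 2 ≤ ε ^ 2) (hε : 0 ≤ ε) :
    IsL1Minimizer a b ε 0 := by
  refine ⟨?_, fun x _ => ?_⟩
  · rw [ampLoss_zero]
    exact (Real.sqrt_le_sqrt hb).trans_eq (Real.sqrt_sq hε)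
  · simpa using Finset.sum_nonneg fun l (_ : l ∈ Finset.univ) => norm_nonneg (x l)

/-- sharpness example for the constrained ℓ₁ model: with `x₀ = e₁`,
`η ≡ 1` and `ε = √(8m)`, with probability at least `1/2` the zero vector is a
minimizer, so some minimizer is at unit distance from the phase orbit of `x₀`. -/
theorem statement19 (Cψ γ : ℝ)
    (d m : ℕ) (hd : 2 ≤ d)
    (Ω : Type) [MeasurableSpace Ω] (μ : Measure Ω) [IsProbabilityMeasure μ]
    (ξ : Ω → ℂ) (a : Fin m → Ω → EuclideanSpace ℂ (Fin d))
    (hξ : StdSubgaussian μ ξ Cψ γ)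
    (ha : IIDEntries μ a ξ)
    (x₀ : EuclideanSpace ℂ (Fin d)) (hx₀ : x₀ = EuclideanSpace.single ⟨0, by omega⟩ (1:ℂ))
    (ε : ℝ) (hε : ε = Real.sqrt (8 * m)) :
    ENNReal.ofReal (1 / 2) ≤
      μ {ω | (∑ j, (‖⟪a j ω, x₀⟫‖ + 1) ^ 2 ≤ ε ^ 2) ∧
             IsL1Minimizer (fun j => a j ω) (fun j => ‖⟪a j ω, x₀⟫‖ + 1) ε 0 ∧
             ∃ xhat : EuclideanSpace ℂ (Fin d),
               IsL1Minimizer (fun j => a j ω) (fun j => ‖⟪a j ω, x₀⟫‖ + 1) ε xhat ∧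
               (∀ θ ∈ Set.Ico (0:ℝ) (2 * π),
                 ‖xhat - Complex.exp (θ * Complex.I) • x₀‖ = 1) ∧
               ε / (Real.sqrt 8 * Real.sqrt m) ≤ 1} := by
  subst hx₀ hε
  set i₀ : Fin d := ⟨0, by omega⟩
  have hid := fun j => (ha.identDistrib hξ.meas j i₀).comp (continuous_norm.pow 2).measurable
  have hgood : 2 / 3 ≤ μ.real {ω | ∑ j, ‖a j ω i₀‖ ^ 2 ≤ 3 * m} := by
    simpa using two_thirds_le_measureReal_sum_le_three_mul_card (μ := μ)
      (f := fun j ω => ‖a j ω i₀‖ ^ 2) (fun j ω => by positivity)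
      (fun j => (hid j).integrable_iff.mpr hξ.integrable_norm_sq)
      (fun j => ((hid j).integral_eq.trans hξ.absSq_one).le)
  rw [ENNReal.ofReal_le_iff_le_toReal (measure_ne_top _ _), ← measureReal_def]
  refine (show (1 : ℝ) / 2 ≤ 2 / 3 by norm_num).trans <| hgood.trans <|
    measureReal_mono fun ω (hω : ∑ j, ‖a j ω i₀‖ ^ 2 ≤ 3 * m) => ?_
  have hsum : ∑ j, (‖⟪a j ω, EuclideanSpace.single i₀ (1 : ℂ)⟫‖ + 1) ^ 2 ≤ √(8 * m) ^ 2 := by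
    rw [Real.sq_sqrt (by positivity)]
    linarith [sum_sq_norm_inner_single_add_one_le (fun j => a j ω) i₀]
  have hmin := isL1Minimizer_zero (a := fun j => a j ω) hsum (Real.sqrt_nonneg _)
  refine ⟨hsum, hmin, 0, hmin, fun θ _ => ?_, ?_⟩
  · simp [norm_smul, Complex.norm_exp]
  · rw [Real.sqrt_mul (by norm_num)]
    exact div_self_le_one _
end
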